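/- Let α > 0. For all nonnegative measurable functions f, g ∈ L²(0,∞), the integral H_α(f,g) = ∫_0^∞ ∫_0^∞ K_α(x,y) f(x) g(y) dy dx satisfies H_α(f,g) ≤ (2/α) · ‖f‖_{L²(0,∞)} ‖g‖_{L²(0,∞)}. -/

import Mathlib

/-!
Schur test. With `k(x,y) = x^α y^(α-1) / max(x,y)^(2α)` one has `K_α(x,y)² = k(x,y) k(y,x)` and
`∫₀^∞ k(x,y) dy = 2/α` for every `x > 0`. Writing `K_α(x,y) f(x) g(y)` as the product of
`√k(x,y) f(x)` and `√k(y,x) g(y)` and applying Cauchy–Schwarz on the quadrant, each factor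
contributes `(2/α)^(1/2)` times an `L²` norm. The estimate is run for lower Lebesgue integrals,
where Tonelli and Hölder need no integrability hypotheses.
-/

open MeasureTheory Set Function
open scoped ENNReal

section SchurTest

variable {X Y : Type*} [MeasurableSpace X] [MeasurableSpace Y]

theorem integral_integral_le_of_lintegral_lintegral_le {μ : Measure X} {ν : Measure Y}
    [SFinite ν] {F : X → Y → ℝ} {C : ℝ} (hF : ∀ᵐ x ∂μ, 0 ≤ᵐ[ν] F x) (hFm : Measurable (uncurry F))
    (h : ∫⁻ x, ∫⁻ y, ENNReal.ofReal (F x y) ∂ν ∂μ ≤ ENNReal.ofReal C) (hC : 0 ≤ C) :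
    ∫ x, ∫ y, F x y ∂ν ∂μ ≤ C := by
  have hinner :
      ∀ᵐ x ∂μ, ∫ y, F x y ∂ν = (∫⁻ y, ENNReal.ofReal (F x y) ∂ν).toReal := by
    filter_upwards [hF] with x hx
    exact integral_eq_lintegral_of_nonneg_ae hx (hFm.of_uncurry_left).aestronglyMeasurable
  have hLm : Measurable fun x => ∫⁻ y, ENNReal.ofReal (F x y) ∂ν :=
    hFm.ennreal_ofReal.lintegral_prod_right'
  rw [integral_congr_ae hinner, integral_toReal hLm.aemeasurable
    (ae_lt_top hLm (ne_top_of_le_ne_top ENNReal.ofReal_ne_top h))]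
  exact ENNReal.toReal_le_of_le_ofReal hC h

theorem lintegral_ofReal_sq_rpow_half {μ : Measure X} {f : X → ℝ} (hf : 0 ≤ᵐ[μ] f)
    (hf2 : Integrable (fun x => f x ^ 2) μ) :
    (∫⁻ x, ENNReal.ofReal (f x) ^ 2 ∂μ) ^ (1 / 2 : ℝ) =
      ENNReal.ofReal √(∫ x, f x ^ 2 ∂μ) := by
  have hsq : ∫⁻ x, ENNReal.ofReal (f x) ^ 2 ∂μ = ∫⁻ x, ENNReal.ofReal (f x ^ 2) ∂μ :=
    lintegral_congr_ae (hf.mono fun x hx => (ENNReal.ofReal_pow hx 2).symm)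
  rw [hsq, ← ofReal_integral_eq_lintegral_ofReal hf2 (ae_of_all _ fun x => sq_nonneg _),
    ENNReal.ofReal_rpow_of_nonneg (integral_nonneg fun x => sq_nonneg _) (by norm_num),
    Real.sqrt_eq_rpow]

variable {μ : Measure X} [SFinite μ]

theorem lintegral_prod_mul_sq_le {k : X → X → ℝ≥0∞} {F : X → ℝ≥0∞} {C : ℝ≥0∞}
    (hk : Measurable (uncurry k)) (hF : AEMeasurable F μ)
    (hrow : ∀ᵐ x ∂μ, ∫⁻ y, k x y ∂μ ≤ C) :
    ∫⁻ z, k z.1 z.2 * F z.1 ^ 2 ∂μ.prod μ ≤ C * ∫⁻ x, F x ^ 2 ∂μ := by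
  rw [lintegral_prod (fun z => k z.1 z.2 * F z.1 ^ 2)
      (hk.aemeasurable.mul (hF.comp_fst.pow_const 2)),
    ← lintegral_const_mul'' _ (hF.pow_const 2)]
  refine lintegral_mono_ae ?_
  filter_upwards [hrow] with x hx
  rw [lintegral_mul_const _ hk.of_uncurry_left]
  gcongr

theorem lintegral_lintegral_mul_le_of_sq_le_mul {K k : X → X → ℝ≥0∞} {F G : X → ℝ≥0∞}
    {C : ℝ≥0∞} (hk : Measurable (uncurry k)) (hF : AEMeasurable F μ) (hG : AEMeasurable G μ)
    (hK : ∀ᵐ x ∂μ, ∀ᵐ y ∂μ, K x y ^ 2 ≤ k x y * k y x)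
    (hrow : ∀ᵐ x ∂μ, ∫⁻ y, k x y ∂μ ≤ C) :
    ∫⁻ x, ∫⁻ y, K x y * F x * G y ∂μ ∂μ ≤
      C * ((∫⁻ x, F x ^ 2 ∂μ) ^ (1 / 2 : ℝ) * (∫⁻ x, G x ^ 2 ∂μ) ^ (1 / 2 : ℝ)) := by
  have hhalf : ∀ a : ℝ≥0∞, (a ^ (1 / 2 : ℝ)) ^ 2 = a := fun a => by
    rw [← ENNReal.rpow_natCast, ← ENNReal.rpow_mul]; norm_num
  set s : X → X → ℝ≥0∞ := fun x y => k x y ^ (1 / 2 : ℝ)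
  have hsq : ∀ x y, s x y ^ 2 = k x y := fun x y => hhalf (k x y)
  have hs : Measurable (uncurry s) := hk.pow_const _
  have hKs : ∀ᵐ x ∂μ, ∀ᵐ y ∂μ, K x y ≤ s x y * s y x := by
    filter_upwards [hK] with x hx
    filter_upwards [hx] with y hy
    rwa [← hsq x y, ← hsq y x, ← mul_pow, ENNReal.pow_le_pow_left_iff two_ne_zero] at hy
  have hu : AEMeasurable (fun z : X × X => s z.1 z.2 * F z.1) (μ.prod μ) :=
    hs.aemeasurable.mul hF.comp_fst
  have hv : AEMeasurable (fun z : X × X => s z.2 z.1 * G z.2) (μ.prod μ) :=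
    (hs.comp measurable_swap).aemeasurable.mul hG.comp_snd
  have hswap :
      ∫⁻ z, k z.2 z.1 * G z.2 ^ 2 ∂μ.prod μ = ∫⁻ z, k z.1 z.2 * G z.1 ^ 2 ∂μ.prod μ :=
    lintegral_prod_swap (fun z : X × X => k z.1 z.2 * G z.1 ^ 2)
  calc ∫⁻ x, ∫⁻ y, K x y * F x * G y ∂μ ∂μ
      ≤ ∫⁻ x, ∫⁻ y, (s x y * F x) * (s y x * G y) ∂μ ∂μ := by
        refine lintegral_mono_ae ?_
        filter_upwards [hKs] with x hx
        refine lintegral_mono_ae ?_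
        filter_upwards [hx] with y hy
        calc K x y * F x * G y ≤ s x y * s y x * F x * G y := by gcongr
          _ = s x y * F x * (s y x * G y) := by ring
    _ = ∫⁻ z, ((fun z : X × X => s z.1 z.2 * F z.1) * fun z : X × X => s z.2 z.1 * G z.2) z
          ∂μ.prod μ :=
        (lintegral_prod _ (hu.mul hv)).symm
    _ ≤ (∫⁻ z, (s z.1 z.2 * F z.1) ^ (2 : ℝ) ∂μ.prod μ) ^ (1 / 2 : ℝ) *
          (∫⁻ z, (s z.2 z.1 * G z.2) ^ (2 : ℝ) ∂μ.prod μ) ^ (1 / 2 : ℝ) :=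
        ENNReal.lintegral_mul_le_Lp_mul_Lq _ Real.HolderConjugate.two_two hu hv
    _ ≤ (C * ∫⁻ x, F x ^ 2 ∂μ) ^ (1 / 2 : ℝ) *
          (C * ∫⁻ x, G x ^ 2 ∂μ) ^ (1 / 2 : ℝ) := by
        simp only [ENNReal.rpow_two, mul_pow, hsq, hswap]
        gcongr <;> exact lintegral_prod_mul_sq_le hk ‹_› hrow
    _ = C * ((∫⁻ x, F x ^ 2 ∂μ) ^ (1 / 2 : ℝ) * (∫⁻ x, G x ^ 2 ∂μ) ^ (1 / 2 : ℝ)) := by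
        rw [ENNReal.mul_rpow_of_nonneg _ _ (by norm_num),
          ENNReal.mul_rpow_of_nonneg _ _ (by norm_num), mul_mul_mul_comm, ← pow_two, hhalf]

end SchurTest

noncomputable def hilbertKernel (α x y : ℝ) : ℝ := (x * y) ^ (α - 1 / 2) / max x y ^ (2 * α)

noncomputable def schurKernel (α x y : ℝ) : ℝ := x ^ α * y ^ (α - 1) / max x y ^ (2 * α)

section Kernel

variable {α x y : ℝ}

theorem hilbertKernel_nonneg (hx : 0 < x) (hy : 0 < y) : 0 ≤ hilbertKernel α x y := by
  unfold hilbertKernel; positivity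

theorem schurKernel_nonneg (hx : 0 < x) (hy : 0 < y) : 0 ≤ schurKernel α x y := by
  unfold schurKernel; positivity

theorem hilbertKernel_sq (hx : 0 < x) (hy : 0 < y) :
    hilbertKernel α x y ^ 2 = schurKernel α x y * schurKernel α y x := by
  have hM : 0 < max x y := lt_max_of_lt_left hx
  unfold hilbertKernel schurKernel
  rw [max_comm y x, div_mul_div_comm, div_pow, ← Real.rpow_natCast _ 2, ← Real.rpow_natCast _ 2,
    ← Real.rpow_mul (by positivity), ← Real.rpow_mul hM.le, Nat.cast_ofNat,
    show (α - 1 / 2) * 2 = α + (α - 1) by ring, Real.rpow_add (by positivity),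
    Real.mul_rpow hx.le hy.le, Real.mul_rpow hx.le hy.le,
    show 2 * α * 2 = 2 * α + 2 * α by ring, Real.rpow_add hM]
  ring

theorem ofReal_hilbertKernel_sq (hx : 0 < x) (hy : 0 < y) :
    ENNReal.ofReal (hilbertKernel α x y) ^ 2 =
      ENNReal.ofReal (schurKernel α x y) * ENNReal.ofReal (schurKernel α y x) := by
  rw [← ENNReal.ofReal_pow (hilbertKernel_nonneg hx hy), hilbertKernel_sq hx hy,
    ENNReal.ofReal_mul (schurKernel_nonneg hx hy)]

theorem schurKernel_of_le (hx : 0 < x) (hyx : y ≤ x) :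
    schurKernel α x y = x ^ (-α) * y ^ (α - 1) := by
  rw [schurKernel, max_eq_left hyx, mul_div_right_comm, ← Real.rpow_sub hx]
  ring_nf

theorem schurKernel_of_lt (hx : 0 < x) (hxy : x < y) :
    schurKernel α x y = x ^ α * y ^ (-α - 1) := by
  rw [schurKernel, max_eq_right hxy.le, mul_div_assoc, ← Real.rpow_sub (hx.trans hxy)]
  ring_nf

theorem integrableOn_schurKernel (hα : 0 < α) (hx : 0 < x) :
    IntegrableOn (schurKernel α x) (Ioi 0) := by
  have hleft : IntegrableOn (schurKernel α x) (Ioc 0 x) := by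
    have hpow : IntegrableOn (fun y : ℝ => y ^ (α - 1)) (Ioc 0 x) := by
      rw [← intervalIntegrable_iff_integrableOn_Ioc_of_le hx.le]
      exact intervalIntegral.intervalIntegrable_rpow' (by linarith)
    exact IntegrableOn.congr_fun (hpow.const_mul (x ^ (-α)))
      (fun y hy => (schurKernel_of_le hx hy.2).symm) measurableSet_Ioc
  have hright : IntegrableOn (schurKernel α x) (Ioi x) :=
    IntegrableOn.congr_fun
      ((integrableOn_Ioi_rpow_of_lt (by linarith : -α - 1 < -1) hx).const_mul (x ^ α))
      (fun y hy => (schurKernel_of_lt hx hy).symm) measurableSet_Ioi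
  rw [← Ioc_union_Ioi_eq_Ioi hx.le]
  exact hleft.union hright

theorem integral_schurKernel (hα : 0 < α) (hx : 0 < x) :
    ∫ y in Ioi 0, schurKernel α x y = 2 / α := by
  have hint := integrableOn_schurKernel hα hx
  rw [← Ioc_union_Ioi_eq_Ioi hx.le] at hint ⊢
  rw [setIntegral_union (Ioc_disjoint_Ioi le_rfl) measurableSet_Ioi
      (hint.mono_set subset_union_left) (hint.mono_set subset_union_right),
    setIntegral_congr_fun measurableSet_Ioc fun y hy => schurKernel_of_le hx hy.2,
    setIntegral_congr_fun measurableSet_Ioi fun y hy => schurKernel_of_lt hx hy,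
    integral_const_mul, integral_const_mul, ← intervalIntegral.integral_of_le hx.le,
    integral_rpow (Or.inl (by linarith)), integral_Ioi_rpow_of_lt (by linarith) hx,
    sub_add_cancel, show -α - 1 + 1 = -α by ring, Real.zero_rpow hα.ne']
  have hinv : x ^ (-α) * x ^ α = 1 := by rw [← Real.rpow_add hx]; simp
  field_simp
  linear_combination 2 * hinv

theorem lintegral_ofReal_schurKernel (hα : 0 < α) (hx : 0 < x) :
    ∫⁻ y in Ioi 0, ENNReal.ofReal (schurKernel α x y) = ENNReal.ofReal (2 / α) := by
  rw [← ofReal_integral_eq_lintegral_ofReal (integrableOn_schurKernel hα hx)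
    ((ae_restrict_mem measurableSet_Ioi).mono fun y hy => schurKernel_nonneg hx hy),
    integral_schurKernel hα hx]

end Kernel

theorem lintegral_lintegral_hilbertKernel_le {α : ℝ} (hα : 0 < α) {f g : ℝ → ℝ}
    (hfm : Measurable f) (hgm : Measurable g)
    (hf : 0 ≤ᵐ[volume.restrict (Ioi 0)] f) (hg : 0 ≤ᵐ[volume.restrict (Ioi 0)] g)
    (hf2 : IntegrableOn (fun x => f x ^ 2) (Ioi 0))
    (hg2 : IntegrableOn (fun x => g x ^ 2) (Ioi 0)) :
    ∫⁻ x in Ioi 0, ∫⁻ y in Ioi 0, ENNReal.ofReal (hilbertKernel α x y * f x * g y) ≤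
      ENNReal.ofReal (2 / α * (√(∫ x in Ioi 0, f x ^ 2) * √(∫ x in Ioi 0, g x ^ 2))) := by
  have hpos : ∀ᵐ x ∂volume.restrict (Ioi (0 : ℝ)), 0 < x :=
    ae_restrict_mem measurableSet_Ioi
  have hsplit : ∀ᵐ x ∂volume.restrict (Ioi 0), ∀ᵐ y ∂volume.restrict (Ioi 0),
      ENNReal.ofReal (hilbertKernel α x y * f x * g y) =
        ENNReal.ofReal (hilbertKernel α x y) * ENNReal.ofReal (f x) * ENNReal.ofReal (g y) := by
    filter_upwards [hpos, hf] with x hx hfx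
    filter_upwards [hpos] with y hy
    have hK := hilbertKernel_nonneg (α := α) hx hy
    rw [ENNReal.ofReal_mul (mul_nonneg hK hfx), ENNReal.ofReal_mul hK]
  calc ∫⁻ x in Ioi 0, ∫⁻ y in Ioi 0, ENNReal.ofReal (hilbertKernel α x y * f x * g y)
      = ∫⁻ x in Ioi 0, ∫⁻ y in Ioi 0,
          ENNReal.ofReal (hilbertKernel α x y) * ENNReal.ofReal (f x) * ENNReal.ofReal (g y) :=
        lintegral_congr_ae (hsplit.mono fun x hx => lintegral_congr_ae hx)
    _ ≤ ENNReal.ofReal (2 / α) *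
          ((∫⁻ x in Ioi 0, ENNReal.ofReal (f x) ^ 2) ^ (1 / 2 : ℝ) *
            (∫⁻ x in Ioi 0, ENNReal.ofReal (g x) ^ 2) ^ (1 / 2 : ℝ)) :=
        lintegral_lintegral_mul_le_of_sq_le_mul (by unfold schurKernel; fun_prop)
          hfm.ennreal_ofReal.aemeasurable hgm.ennreal_ofReal.aemeasurable
          (hpos.mono fun x hx => hpos.mono fun y hy => (ofReal_hilbertKernel_sq hx hy).le)
          (hpos.mono fun x hx => (lintegral_ofReal_schurKernel hα hx).le)
    _ = _ := by
        rw [lintegral_ofReal_sq_rpow_half hf hf2, lintegral_ofReal_sq_rpow_half hg hg2,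
          ← ENNReal.ofReal_mul (Real.sqrt_nonneg _), ← ENNReal.ofReal_mul (by positivity)]

theorem continuous_form_upper_bound (α : ℝ) (hα : 0 < α) (f g : ℝ → ℝ)
    (hfm : Measurable f) (hgm : Measurable g)
    (hf0 : ∀ x ∈ Set.Ioi (0:ℝ), 0 ≤ f x) (hg0 : ∀ x ∈ Set.Ioi (0:ℝ), 0 ≤ g x)
    (hf2 : IntegrableOn (fun x => f x ^ 2) (Set.Ioi 0))
    (hg2 : IntegrableOn (fun x => g x ^ 2) (Set.Ioi 0)) :
    ∫ x in Set.Ioi (0:ℝ), ∫ y in Set.Ioi (0:ℝ),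
        (x * y) ^ (α - 1/2) / (max x y) ^ (2*α) * f x * g y
      ≤ (2/α) * (Real.sqrt (∫ x in Set.Ioi (0:ℝ), f x ^ 2) *
          Real.sqrt (∫ x in Set.Ioi (0:ℝ), g x ^ 2)) := by
  have hpos : ∀ᵐ x ∂volume.restrict (Ioi (0 : ℝ)), 0 < x :=
    ae_restrict_mem measurableSet_Ioi
  have hf : 0 ≤ᵐ[volume.restrict (Ioi 0)] f := hpos.mono hf0
  have hg : 0 ≤ᵐ[volume.restrict (Ioi 0)] g := hpos.mono hg0
  refine integral_integral_le_of_lintegral_lintegral_le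
    (F := fun x y => hilbertKernel α x y * f x * g y) ?_ ?_
    (lintegral_lintegral_hilbertKernel_le hα hfm hgm hf hg hf2 hg2) (by positivity)
  · filter_upwards [hpos, hf] with x hx hfx
    filter_upwards [hpos, hg] with y hy hgy
    exact mul_nonneg (mul_nonneg (hilbertKernel_nonneg hx hy) hfx) hgy
  · unfold hilbertKernel; fun_prop
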